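/- Let C be a tensor code of dimension k in 𝔽 and let j ∈ {1,…,k}. For all 𝔞, 𝔟 ∈ 𝔑^cl ∪ {𝔬} the following hold: (1) B_𝔞^{(cl,j)}(C) = Σ over 𝔟 ∈ 𝔑^cl with 𝔟 ≤ 𝔞 (componentwise) of W_𝔟^{(cl,j)}(C) · ∏_{i=1}^r [n_i − 𝔟_i choose 𝔞_i − 𝔟_i]_q; (2) W_𝔟^{(cl,j)}(C) = Σ over 𝔞 ∈ 𝔑^cl with 𝔞 ≤ 𝔟 of B_𝔞^{(cl,j)}(C) · ∏_{i=1}^r (−1)^{𝔟_i−𝔞_i} q^{(𝔟_i−𝔞_i)(𝔟_i−𝔞_i−1)/2} [n_i − 𝔞_i choose 𝔟_i − 𝔞_i]_q. -/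

import Mathlib

open Module Function

namespace TensorPaper

variable {F : Type*} [Field F] [Fintype F]

/-- The tensor space `𝔽 = 𝔽_q^{n₁} ⊗ ⋯ ⊗ 𝔽_q^{n_r}`, identified with `r`-dimensional arrays. -/
abbrev TSpace (F : Type*) {r : ℕ} (n : Fin r → ℕ) : Type _ := (∀ i, Fin (n i)) → F

/-- The dual code with respect to the standard bilinear form `X*Y = ∑ X_m Y_m`. -/
def dualCode {ι : Type*} [Fintype ι] (C : Submodule F (ι → F)) : Submodule F (ι → F) where
  carrier := { X | ∀ Y ∈ C, ∑ m, X m * Y m = 0 }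
  add_mem' := by
    intro a b ha hb Y hY
    have h1 := ha Y hY
    have h2 := hb Y hY
    simp only [Pi.add_apply, add_mul]
    rw [Finset.sum_add_distrib, h1, h2, add_zero]
  zero_mem' := by
    intro Y _
    simp
  smul_mem' := by
    intro c a ha Y hY
    have h1 := ha Y hY
    simp only [Pi.smul_apply, smul_eq_mul, mul_assoc]
    rw [← Finset.mul_sum, h1, mul_zero]

/-- The array corresponding to a simple (rank-one) tensor `x⁽¹⁾ ⊗ ⋯ ⊗ x⁽ʳ⁾`. -/
def simpleTensor {r : ℕ} (n : Fin r → ℕ) (x : ∀ i, Fin (n i) → F) : TSpace F n :=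
  fun m => ∏ i, x i (m i)

/-- The closure-type anticode `A⁽¹⁾ ⊗ ⋯ ⊗ A⁽ʳ⁾`: the span of all simple tensors whose
`i`-th factor lies in `U i`. -/
def closureAnticode {r : ℕ} (n : Fin r → ℕ) (U : ∀ i, Submodule F (Fin (n i) → F)) :
    Submodule F (TSpace F n) :=
  Submodule.span F { X | ∃ x : ∀ i, Fin (n i) → F, (∀ i, x i ∈ U i) ∧ X = simpleTensor n x }

/-- The family `𝒜^cl` of closure-type anticodes. -/
def ClosureAnticodes {r : ℕ} (n : Fin r → ℕ) : Set (Submodule F (TSpace F n)) :=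
  { A | ∃ U : ∀ i, Submodule F (Fin (n i) → F), A = closureAnticode n U }

/-- The family `𝒜^R` of Ravagnani-type anticodes:
`𝔽^{n₁} ⊗ ⋯ ⊗ A^{(i)} ⊗ ⋯ ⊗ 𝔽^{n_r}` with `n_i = n₁`. -/
def RavagnaniAnticodes {r : ℕ} (n : Fin (r + 2) → ℕ) : Set (Submodule F (TSpace F n)) :=
  { A | ∃ (i : Fin (r + 2)) (U : Submodule F (Fin (n i) → F)),
      n i = n 0 ∧ A = closureAnticode n (Function.update (fun s => ⊤) i U) }

/-- The family `𝒜^D` of Delsarte-type anticodes: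
`𝔽^{n₁} ⊗ ⋯ ⊗ A^{(i)} ⊗ ⋯ ⊗ 𝔽^{n_r}` with `i ≠ p` for some `p` with `n_p = n_r`. -/
def DelsarteAnticodes {r : ℕ} (n : Fin (r + 2) → ℕ) : Set (Submodule F (TSpace F n)) :=
  { A | ∃ (p i : Fin (r + 2)), n p = n (Fin.last (r + 1)) ∧ i ≠ p ∧
      ∃ U : Submodule F (Fin (n i) → F),
        A = closureAnticode n (Function.update (fun s => ⊤) i U) }

/-- The `j`-th tensor weight `t_j^R` of `C` with respect to `𝒜^R`, with the convention
`t^R({0}) = n + n/n₁`. -/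
noncomputable def tR {r : ℕ} (n : Fin (r + 2) → ℕ) (j : ℕ) (C : Submodule F (TSpace F n)) : ℕ := by
  classical exact
    if C = ⊥ then (∏ i, n i) + (∏ i, n i) / n 0
    else sInf { a | ∃ A ∈ RavagnaniAnticodes n, j ≤ finrank F ↥(C ⊓ A) ∧ finrank F ↥A = a }

/-- The `j`-th tensor weight `t_j^D` of `C` with respect to `𝒜^D`. -/
noncomputable def tD {r : ℕ} (n : Fin (r + 2) → ℕ) (j : ℕ) (C : Submodule F (TSpace F n)) : ℕ :=
  sInf { a | ∃ A ∈ DelsarteAnticodes n, j ≤ finrank F ↥(C ⊓ A) ∧ finrank F ↥A = a }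

/-- The `j`-th tensor weight `t_j^cl` of `C` with respect to `𝒜^cl`. -/
noncomputable def tCl {r : ℕ} (n : Fin r → ℕ) (j : ℕ) (C : Submodule F (TSpace F n)) : ℕ :=
  sInf { a | ∃ A ∈ ClosureAnticodes n, j ≤ finrank F ↥(C ⊓ A) ∧ finrank F ↥A = a }

/-- The `j`-th dual tensor weight `s_j^cl` of `C` with respect to the dual anticodes
`𝒜̄^cl = {A^⊥ : A ∈ 𝒜^cl}`. -/
noncomputable def sCl {r : ℕ} (n : Fin r → ℕ) (j : ℕ) (C : Submodule F (TSpace F n)) : ℕ :=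
  sInf { a | ∃ A ∈ ClosureAnticodes n,
    j ≤ finrank F ↥(C ⊓ dualCode A) ∧ finrank F ↥(dualCode A) = a }

/-- `C` is `j`-TMRD with respect to `𝒜^R`: `t_j^R(C) = n − (n/n₁)⌊(n₁/n)(k−j)⌋`. -/
def isTMRD {r : ℕ} (n : Fin (r + 2) → ℕ) (j : ℕ) (C : Submodule F (TSpace F n)) : Prop :=
  tR n j C = (∏ i, n i) - ((∏ i, n i) / n 0) * (n 0 * (finrank F ↥C - j) / ∏ i, n i)

/-- `C` is `j`-TBMD with respect to `𝒜^R`: `n − t_j^R(C) − t₁^R(C^⊥) < 0`. -/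
def isTBMD {r : ℕ} (n : Fin (r + 2) → ℕ) (j : ℕ) (C : Submodule F (TSpace F n)) : Prop :=
  ((∏ i, n i : ℕ) : ℤ) - tR n j C - tR n 1 (dualCode C) < 0

/-- The Gaussian binomial coefficient `[a choose b]_q`, equal to `0` if `a < b`. -/
noncomputable def qBinom (q : ℕ) (a : ℤ) (b : ℕ) : ℚ :=
  if a < (b : ℤ) then 0
  else ∏ i ∈ Finset.range b, ((q : ℚ) ^ (a - i).toNat - 1) / ((q : ℚ) ^ (i + 1) - 1)

/-- The `(a,j)`-th tensor binomial moment of `C` with respect to `𝒜^R`. -/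
noncomputable def BR {r : ℕ} (n : Fin (r + 2) → ℕ) (j : ℕ) (C : Submodule F (TSpace F n))
    (a : ℕ) : ℚ :=
  ∑ᶠ A ∈ (RavagnaniAnticodes n ∩ {A | finrank F ↥A = a}),
    qBinom (Fintype.card F) (finrank F ↥(C ⊓ A)) j

/-- The `(a,j)`-th entry of the weight distribution of `C` with respect to `𝒜^R`. -/
noncomputable def WR {r : ℕ} (n : Fin (r + 2) → ℕ) (j : ℕ) (C : Submodule F (TSpace F n))
    (a : ℕ) : ℚ :=
  ∑ᶠ A ∈ (RavagnaniAnticodes n ∩ {A | finrank F ↥A = a}),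
    (Nat.card {D : Submodule F (TSpace F n) //
      D ≤ C ⊓ A ∧ finrank F ↥D = j ∧
      ∀ B ∈ RavagnaniAnticodes n, D ≤ B → B ≤ A → B = A} : ℚ)

/-- The `(a,j)`-th tensor binomial moment of `C` with respect to `𝒜^D`. -/
noncomputable def BD {r : ℕ} (n : Fin (r + 2) → ℕ) (j : ℕ) (C : Submodule F (TSpace F n))
    (a : ℕ) : ℚ :=
  ∑ᶠ A ∈ (DelsarteAnticodes n ∩ {A | finrank F ↥A = a}),
    qBinom (Fintype.card F) (finrank F ↥(C ⊓ A)) j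

/-- The `(a,j)`-th entry of the weight distribution of `C` with respect to `𝒜^D`. -/
noncomputable def WD {r : ℕ} (n : Fin (r + 2) → ℕ) (j : ℕ) (C : Submodule F (TSpace F n))
    (a : ℕ) : ℚ :=
  ∑ᶠ A ∈ (DelsarteAnticodes n ∩ {A | finrank F ↥A = a}),
    (Nat.card {D : Submodule F (TSpace F n) //
      D ≤ C ⊓ A ∧ finrank F ↥D = j ∧
      ∀ B ∈ DelsarteAnticodes n, D ≤ B → B ≤ A → B = A} : ℚ)

/-- The `(a,j)`-th normalized tensor binomial moment of `C` with respect to `𝒜^R`. -/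
noncomputable def bR {r : ℕ} (n : Fin (r + 2) → ℕ) (j : ℕ) (C : Submodule F (TSpace F n))
    (a : ℤ) : ℚ :=
  if a < 0 then 0
  else if a ≤ ((∏ i, n i : ℕ) : ℤ) - tR n j C - tR n 1 (dualCode C) then
    BR n j C (a.toNat + tR n j C) /
      ((RavagnaniAnticodes (F := F) n ∩ {A | finrank F ↥A = a.toNat + tR n j C}).ncard : ℚ)
  else if ((∏ i, n i : ℕ) : ℤ) ∣ a * n 0 then
    qBinom (Fintype.card F) ((finrank F ↥C : ℤ) + a + tR n j C - (∏ i, n i : ℕ)) j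
  else 0

/-- The `j`-th tensor zeta function of `C` with respect to `𝒜^R`. -/
noncomputable def ZR {r : ℕ} (n : Fin (r + 2) → ℕ) (j : ℕ) (C : Submodule F (TSpace F n)) :
    PowerSeries ℚ :=
  PowerSeries.mk fun a => bR n j C (a : ℤ)

/-- The `q`-Bernstein polynomial `𝓑_{b,a}(X,Y;q)`. -/
noncomputable def qBernstein {R : Type*} [CommRing R] [Algebra ℚ R] (q : ℕ) (b a : ℕ)
    (X Y : R) : R :=
  algebraMap ℚ R (qBinom q (b : ℤ) a) * Y ^ a *
    ∏ c ∈ Finset.range (b - a), (X - (q : R) ^ c * Y)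

/-- The closure-type anticodes with dimension distribution `𝔞`. -/
def closureAnticodesOf {r : ℕ} (n : Fin r → ℕ) (𝔞 : Fin r → ℕ) :
    Set (Submodule F (TSpace F n)) :=
  { A | ∃ U : ∀ i, Submodule F (Fin (n i) → F),
      (∀ i, finrank F ↥(U i) = 𝔞 i) ∧ A = closureAnticode n U }

/-- The refined tensor binomial moment `B_𝔞^{(cl,j)}(C)`. -/
noncomputable def BCl {r : ℕ} (n : Fin r → ℕ) (j : ℕ) (C : Submodule F (TSpace F n))
    (𝔞 : Fin r → ℕ) : ℚ :=
  ∑ᶠ A ∈ closureAnticodesOf n 𝔞, qBinom (Fintype.card F) (finrank F ↥(C ⊓ A)) j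

/-- The refined weight distribution `W_𝔞^{(cl,j)}(C)`. -/
noncomputable def WCl {r : ℕ} (n : Fin r → ℕ) (j : ℕ) (C : Submodule F (TSpace F n))
    (𝔞 : Fin r → ℕ) : ℚ :=
  ∑ᶠ A ∈ closureAnticodesOf n 𝔞,
    (Nat.card {D : Submodule F (TSpace F n) //
      D ≤ C ⊓ A ∧ finrank F ↥D = j ∧
      ∀ B ∈ ClosureAnticodes n, D ≤ B → B ≤ A → B = A} : ℚ)

/-- The refined tensor binomial moment `B_𝔞^{(D,j)}(C)` for Delsarte-type anticodes. -/
noncomputable def BDref {r : ℕ} (n : Fin (r + 2) → ℕ) (j : ℕ) (C : Submodule F (TSpace F n))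
    (𝔞 : Fin (r + 2) → ℕ) : ℚ :=
  ∑ᶠ A ∈ (DelsarteAnticodes n ∩ closureAnticodesOf n 𝔞),
    qBinom (Fintype.card F) (finrank F ↥(C ⊓ A)) j

/-- The refined tensor binomial moment `B_𝔞^{(R,j)}(C)` for Ravagnani-type anticodes. -/
noncomputable def BRref {r : ℕ} (n : Fin (r + 2) → ℕ) (j : ℕ) (C : Submodule F (TSpace F n))
    (𝔞 : Fin (r + 2) → ℕ) : ℚ :=
  ∑ᶠ A ∈ (RavagnaniAnticodes n ∩ closureAnticodesOf n 𝔞),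
    qBinom (Fintype.card F) (finrank F ↥(C ⊓ A)) j

/-- The power series `P(T^m)` obtained from a polynomial `P` by substituting `T^m`. -/
noncomputable def substPow (P : Polynomial ℚ) (m : ℕ) : PowerSeries ℚ :=
  ∑ i ∈ Finset.range (P.natDegree + 1), PowerSeries.C (P.coeff i) * PowerSeries.X ^ (m * i)


/-- numerator -/
noncomputable def qnum (q N k : ℕ) : ℚ := ∏ i ∈ Finset.range k, ((q : ℚ) ^ (N - i) - 1)

/-- denominator -/
noncomputable def qden (q k : ℕ) : ℚ := ∏ i ∈ Finset.range k, ((q : ℚ) ^ (i + 1) - 1)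

variable {q : ℕ}

lemma one_lt_qpow (hq : 2 ≤ q) {k : ℕ} (hk : 1 ≤ k) : (1 : ℚ) < (q : ℚ) ^ k := by
  calc (1:ℚ) < 2 := by norm_num
  _ ≤ (q:ℚ) := by exact_mod_cast hq
  _ = (q:ℚ) ^ 1 := (pow_one _).symm
  _ ≤ (q:ℚ) ^ k := by
      apply pow_le_pow_right₀ (by exact_mod_cast (by omega : 1 ≤ q)) hk

lemma qden_ne_zero (hq : 2 ≤ q) (k : ℕ) : qden q k ≠ 0 := by
  refine Finset.prod_ne_zero_iff.2 fun i _ => ?_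
  have := one_lt_qpow hq (k := i + 1) (by omega)
  linarith

lemma qnum_ne_zero (hq : 2 ≤ q) {N k : ℕ} (h : k ≤ N) : qnum q N k ≠ 0 := by
  refine Finset.prod_ne_zero_iff.2 fun i hi => ?_
  rw [Finset.mem_range] at hi
  have := one_lt_qpow hq (k := N - i) (by omega)
  linarith

lemma qBinom_eq_div {N k : ℕ} (h : k ≤ N) :
    qBinom q (N : ℤ) k = qnum q N k / qden q k := by
  rw [qBinom, if_neg (by exact_mod_cast not_lt.2 h), qnum, qden, ← Finset.prod_div_distrib]
  refine Finset.prod_congr rfl fun i hi => ?_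
  rw [Finset.mem_range] at hi
  rw [show ((N:ℤ) - (i:ℤ)).toNat = N - i by omega]

lemma qBinom_nat_lt {N k : ℕ} (h : N < k) : qBinom q (N : ℤ) k = 0 := by
  rw [qBinom, if_pos (by exact_mod_cast h)]

lemma qBinom_zero_right (N : ℕ) : qBinom q (N : ℤ) 0 = 1 := by
  rw [qBinom, if_neg (by exact_mod_cast (by omega : ¬ N < 0)), Finset.range_zero, Finset.prod_empty]

lemma qnum_self (N : ℕ) : qnum q N N = qden q N := by
  rw [qnum, ← Finset.prod_range_reflect]
  refine Finset.prod_congr rfl fun i hi => ?_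
  rw [Finset.mem_range] at hi
  rw [show N - (N - 1 - i) = i + 1 by omega]

lemma qBinom_self (hq : 2 ≤ q) (N : ℕ) : qBinom q (N : ℤ) N = 1 := by
  rw [qBinom_eq_div le_rfl, qnum_self, div_self (qden_ne_zero hq N)]

lemma qnum_succ_left {N k : ℕ} (hk : 1 ≤ k) :
    qnum q N k = qnum q (N - 1) (k - 1) * ((q : ℚ) ^ N - 1) := by
  obtain ⟨k, rfl⟩ : ∃ k', k = k' + 1 := ⟨k - 1, by omega⟩
  rw [qnum, Finset.prod_range_succ']
  simp only [Nat.add_sub_cancel, Nat.sub_zero, qnum]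
  congr 1
  refine Finset.prod_congr rfl fun i hi => ?_
  rw [show N - (i + 1) = N - 1 - i by omega]

lemma qnum_succ_right {N k : ℕ} (hk : 1 ≤ k) :
    qnum q N k = qnum q N (k - 1) * ((q : ℚ) ^ (N - (k - 1)) - 1) := by
  obtain ⟨k, rfl⟩ : ∃ k', k = k' + 1 := ⟨k - 1, by omega⟩
  rw [qnum, Finset.prod_range_succ]
  simp [qnum]

/-- Pascal rule (second form). -/
lemma qBinom_pascal (hq : 2 ≤ q) {m k : ℕ} (h1 : 1 ≤ k) (h2 : k ≤ m) :
    qBinom q (m : ℤ) k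
      = (q : ℚ) ^ (m - k) * qBinom q ((m - 1 : ℕ) : ℤ) (k - 1)
        + qBinom q ((m - 1 : ℕ) : ℤ) k := by
  rcases eq_or_lt_of_le h2 with rfl | hlt
  · rw [qBinom_self hq, qBinom_self hq, qBinom_nat_lt (by omega)]
    simp
  · have hkm : k ≤ m - 1 := by omega
    rw [qBinom_eq_div (by omega), qBinom_eq_div (by omega), qBinom_eq_div hkm]
    have hd : qden q k = qden q (k - 1) * ((q:ℚ) ^ k - 1) := by
      obtain ⟨k', rfl⟩ : ∃ k', k = k' + 1 := ⟨k - 1, by omega⟩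
      rw [qden, Finset.prod_range_succ]; simp [qden]
    have hden1 := qden_ne_zero hq k
    have hdenk1 := qden_ne_zero hq (k - 1)
    have hqk : ((q:ℚ) ^ k - 1) ≠ 0 := by have := one_lt_qpow hq h1; linarith
    rw [qnum_succ_left h1, qnum_succ_right (N := m - 1) h1]
    have h3 : (m - 1) - (k - 1) = m - k := by omega
    rw [h3]
    have h4 : (q:ℚ)^(m-k) * (q:ℚ)^k = (q:ℚ)^m := by
      rw [← pow_add]; congr 1; omega
    rw [hd, ← h4]
    field_simp
    ring

/-- The alternating sum identity. -/
lemma qBinom_alternating (hq : 2 ≤ q) {m : ℕ} (hm : 1 ≤ m) :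
    ∑ k ∈ Finset.range (m + 1),
      (-1 : ℚ) ^ (m - k) * (q : ℚ) ^ Nat.choose (m - k) 2 * qBinom q (m : ℤ) k = 0 := by
  have key : ∀ k < m, qBinom q (m : ℤ) (k+1)
      = (q : ℚ) ^ (m - (k+1)) * qBinom q ((m - 1 : ℕ) : ℤ) k
        + qBinom q ((m - 1 : ℕ) : ℤ) (k+1) := by
    intro k hk
    have := qBinom_pascal hq (m := m) (k := k + 1) (by omega) (by omega)
    simpa using this
  rw [Finset.sum_range_succ']
  -- now: ∑ k in range m, f (k+1) + f 0 = 0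
  have T : ∑ k ∈ Finset.range (m + 1),
      (-1:ℚ)^(m-k) * (q:ℚ)^Nat.choose (m-k) 2 * qBinom q ((m-1:ℕ):ℤ) k
      = ∑ k ∈ Finset.range m,
          (-1:ℚ)^(m-(k+1)) * (q:ℚ)^Nat.choose (m-(k+1)) 2 * qBinom q ((m-1:ℕ):ℤ) (k+1)
        + (-1:ℚ)^m * (q:ℚ)^Nat.choose m 2 := by
    rw [Finset.sum_range_succ']
    simp [qBinom_zero_right]
  have T2 : ∑ k ∈ Finset.range (m + 1),
      (-1:ℚ)^(m-k) * (q:ℚ)^Nat.choose (m-k) 2 * qBinom q ((m-1:ℕ):ℤ) k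
      = ∑ k ∈ Finset.range m,
          (-1:ℚ)^(m-k) * (q:ℚ)^Nat.choose (m-k) 2 * qBinom q ((m-1:ℕ):ℤ) k := by
    rw [Finset.sum_range_succ, qBinom_nat_lt (by omega)]
    simp
  calc ∑ k ∈ Finset.range m,
        (-1:ℚ)^(m-(k+1)) * (q:ℚ)^Nat.choose (m-(k+1)) 2 * qBinom q (m:ℤ) (k+1)
        + (-1:ℚ)^(m-0) * (q:ℚ)^Nat.choose (m-0) 2 * qBinom q (m:ℤ) 0
      = ∑ k ∈ Finset.range m,
          ((-1:ℚ)^(m-(k+1)) * (q:ℚ)^Nat.choose (m-(k+1)) 2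
            * ((q:ℚ)^(m-(k+1)) * qBinom q ((m-1:ℕ):ℤ) k)
          + (-1:ℚ)^(m-(k+1)) * (q:ℚ)^Nat.choose (m-(k+1)) 2 * qBinom q ((m-1:ℕ):ℤ) (k+1))
        + (-1:ℚ)^m * (q:ℚ)^Nat.choose m 2 := by
        rw [Nat.sub_zero, qBinom_zero_right]
        congr 1
        · refine Finset.sum_congr rfl fun k hk => ?_
          rw [Finset.mem_range] at hk
          rw [key k hk]; ring
        · ring
  _ = ∑ k ∈ Finset.range m,
        (-1:ℚ)^(m-(k+1)) * (q:ℚ)^Nat.choose (m-(k+1)) 2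
          * ((q:ℚ)^(m-(k+1)) * qBinom q ((m-1:ℕ):ℤ) k)
      + ∑ k ∈ Finset.range (m+1),
          (-1:ℚ)^(m-k) * (q:ℚ)^Nat.choose (m-k) 2 * qBinom q ((m-1:ℕ):ℤ) k := by
        rw [T, Finset.sum_add_distrib]
        ring
  _ = 0 := by
      rw [T2, ← Finset.sum_add_distrib]
      refine Finset.sum_eq_zero fun k hk => ?_
      rw [Finset.mem_range] at hk
      have hsgn : (-1:ℚ)^(m-k) = -(-1:ℚ)^(m-(k+1)) := by
        have : m - k = (m - (k+1)) + 1 := by omega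
        rw [this, pow_succ]; ring
      have hpow : (q:ℚ)^Nat.choose (m-(k+1)) 2 * (q:ℚ)^(m-(k+1)) = (q:ℚ)^Nat.choose (m-k) 2 := by
        rw [← pow_add]
        congr 1
        have h1 : m - k = (m - (k+1)) + 1 := by omega
        rw [h1, Nat.choose_succ_succ]
        simp [Nat.choose_one_right, Nat.add_comm]
      rw [hsgn, ← hpow]
      ring


/-- trinomial revision -/
lemma qBinom_trinomial (hq : 2 ≤ q) {N m k : ℕ} (hk : k ≤ m) (hm : m ≤ N) :
    qBinom q (N : ℤ) k * qBinom q ((N - k : ℕ) : ℤ) (m - k)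
      = qBinom q (N : ℤ) m * qBinom q (m : ℤ) k := by
  rw [qBinom_eq_div (by omega), qBinom_eq_div (by omega), qBinom_eq_div (by omega),
    qBinom_eq_div (by omega)]
  have hnum : qnum q N k * qnum q (N - k) (m - k) = qnum q N m := by
    have h := Finset.prod_range_add (fun i => ((q:ℚ)^(N - i) - 1)) k (m - k)
    rw [show k + (m - k) = m by omega] at h
    rw [qnum, qnum, qnum, h]
    congr 1
    exact Finset.prod_congr rfl fun i hi => by rw [show N - k - i = N - (k + i) by omega]
  have hden : qnum q m k * qden q (m - k) = qden q m := by
    have h := Finset.prod_range_add (fun i => ((q:ℚ)^(i+1) - 1)) (m - k) k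
    rw [show (m - k) + k = m by omega] at h
    rw [qden, qden, qnum, h, mul_comm]
    congr 1
    rw [← Finset.prod_range_reflect (fun i => ((q:ℚ)^(m - i) - 1)) k]
    refine Finset.prod_congr rfl fun i hi => ?_
    rw [Finset.mem_range] at hi
    rw [show m - (k - 1 - i) = m - k + i + 1 by omega]
  have d1 := qden_ne_zero hq k
  have d2 := qden_ne_zero hq (m - k)
  have d3 := qden_ne_zero hq m
  have n1 : qnum q m k ≠ 0 := qnum_ne_zero hq hk
  rw [div_mul_div_comm, div_mul_div_comm, hnum, ← hden]
  field_simp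

lemma prod_pow_sub_eq {N k : ℕ} (hk : k ≤ N) :
    ∏ i ∈ Finset.range k, ((q:ℚ)^N - (q:ℚ)^i)
      = (∏ i ∈ Finset.range k, (q:ℚ)^i) * qnum q N k := by
  rw [qnum, ← Finset.prod_mul_distrib]
  refine Finset.prod_congr rfl fun i hi => ?_
  rw [Finset.mem_range] at hi
  rw [mul_sub, mul_one, ← pow_add, show i + (N - i) = N by omega]

/-- The count-of-subspaces identity. -/
lemma qBinom_count_eq (hq : 2 ≤ q) {N k : ℕ} (hk : k ≤ N) :
    qBinom q (N : ℤ) k * ∏ i ∈ Finset.range k, ((q:ℚ) ^ k - (q:ℚ) ^ i)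
      = ∏ i ∈ Finset.range k, ((q:ℚ) ^ N - (q:ℚ) ^ i) := by
  rw [qBinom_eq_div hk, prod_pow_sub_eq (le_refl k), prod_pow_sub_eq hk, qnum_self]
  have := qden_ne_zero hq k
  field_simp

/-- The inversion identity. -/
lemma qBinom_inversion (hq : 2 ≤ q) {n d b : ℕ} (hdb : d ≤ b) (hbn : b ≤ n) :
    ∑ c ∈ Finset.Icc d b,
        qBinom q ((n - d : ℕ) : ℤ) (c - d)
          * ((-1 : ℚ) ^ (b - c) * (q : ℚ) ^ Nat.choose (b - c) 2
              * qBinom q ((n - c : ℕ) : ℤ) (b - c)) = if d = b then 1 else 0 := by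
  have hIcc : Finset.Icc d b = Finset.map ⟨fun k => d + k, add_right_injective d⟩
      (Finset.range (b - d + 1)) := by
    ext c
    simp only [Finset.mem_Icc, Finset.mem_map, Finset.mem_range, Function.Embedding.coeFn_mk]
    constructor
    · rintro ⟨h1, h2⟩; exact ⟨c - d, by omega, by omega⟩
    · rintro ⟨k, hk, rfl⟩; omega
  rw [hIcc, Finset.sum_map]
  simp only [Function.Embedding.coeFn_mk]
  have step : ∀ k ∈ Finset.range (b - d + 1),
      qBinom q ((n - d : ℕ) : ℤ) (d + k - d)
        * ((-1:ℚ)^(b - (d+k)) * (q:ℚ)^Nat.choose (b - (d+k)) 2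
            * qBinom q ((n - (d+k) : ℕ) : ℤ) (b - (d+k)))
      = qBinom q ((n-d:ℕ):ℤ) (b-d)
        * ((-1:ℚ)^((b-d) - k) * (q:ℚ)^Nat.choose ((b-d)-k) 2 * qBinom q ((b-d:ℕ):ℤ) k) := by
    intro k hk
    rw [Finset.mem_range] at hk
    have e1 : d + k - d = k := by omega
    have e2 : b - (d + k) = (b - d) - k := by omega
    have e3 : (n - (d + k) : ℕ) = (n - d - k : ℕ) := by omega
    rw [e1, e2, e3]
    have tri := qBinom_trinomial hq (N := n - d) (m := b - d) (k := k) (by omega) (by omega)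
    calc qBinom q ((n-d:ℕ):ℤ) k * ((-1:ℚ)^((b-d)-k) * (q:ℚ)^Nat.choose ((b-d)-k) 2
            * qBinom q ((n-d-k:ℕ):ℤ) ((b-d)-k))
        = (qBinom q ((n-d:ℕ):ℤ) k * qBinom q ((n-d-k:ℕ):ℤ) ((b-d)-k))
            * ((-1:ℚ)^((b-d)-k) * (q:ℚ)^Nat.choose ((b-d)-k) 2) := by ring
      _ = (qBinom q ((n-d:ℕ):ℤ) (b-d) * qBinom q ((b-d:ℕ):ℤ) k)
            * ((-1:ℚ)^((b-d)-k) * (q:ℚ)^Nat.choose ((b-d)-k) 2) := by rw [tri]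
      _ = _ := by ring
  rw [Finset.sum_congr rfl step, ← Finset.mul_sum]
  rcases Nat.eq_or_lt_of_le hdb with rfl | hlt
  · rw [Nat.sub_self, if_pos rfl]
    have h0 : qBinom q (0:ℤ) 0 = 1 := by simpa using qBinom_zero_right (q := q) 0
    simp [Finset.sum_range_one, qBinom_zero_right, h0]
  · rw [if_neg (by omega)]
    have e := qBinom_alternating hq (m := b - d) (by omega)
    rw [e, mul_zero]

section Counting

open Module

variable {F : Type*} [Field F] [Fintype F] {V : Type*} [AddCommGroup V] [Module F V] [Finite V]

instance : Finite (Submodule F V) :=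
  Finite.of_injective (fun p => (p : Set V)) SetLike.coe_injective

instance : Module.Finite F V :=
  ⟨⟨(Set.univ : Set V).toFinite.toFinset, by simp⟩⟩

lemma cast_prod_pow_sub {q N k : ℕ} (hq : 1 ≤ q) (h : k ≤ N) :
    ((∏ i : Fin k, (q ^ N - q ^ (i : ℕ)) : ℕ) : ℚ)
      = ∏ i ∈ Finset.range k, ((q : ℚ) ^ N - (q : ℚ) ^ i) := by
  rw [Fin.prod_univ_eq_prod_range (fun i => q ^ N - q ^ i) k, Nat.cast_prod]
  refine Finset.prod_congr rfl fun i hi => ?_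
  rw [Finset.mem_range] at hi
  have hle : q ^ i ≤ q ^ N := Nat.pow_le_pow_right hq (by omega)
  rw [Nat.cast_sub hle, Nat.cast_pow, Nat.cast_pow]

lemma card_finrank_subspaces (k : ℕ) :
    (Nat.card {W : Submodule F V // finrank F ↥W = k} : ℚ)
      = qBinom (Fintype.card F) ((finrank F V : ℕ) : ℤ) k := by
  classical
  haveI : Module.Finite F V := (by infer_instance : Module.Finite F V)
  set q := Fintype.card F with hqdef
  have hq : 2 ≤ q := Fintype.one_lt_card
  by_cases hk : k ≤ finrank F V
  · let g : (Σ W : {W : Submodule F V // finrank F ↥W = k},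
        {t : Fin k → ↥W.1 // LinearIndependent F t}) → {s : Fin k → V // LinearIndependent F s} :=
      fun p => ⟨fun i => (p.2.1 i : V), p.2.2.map' p.1.1.subtype (Submodule.ker_subtype _)⟩
    have hspan : ∀ (W : Submodule F V), finrank F ↥W = k → ∀ (t : Fin k → ↥W),
        LinearIndependent F t → Submodule.span F (Set.range fun i => (t i : V)) = W := by
      intro W hW t ht
      have h1 : (Set.range fun i => (t i : V)) = W.subtype '' Set.range t := by
        rw [← Set.range_comp]; rfl
      rw [h1, Submodule.span_image]
      have htop : Submodule.span F (Set.range t) = ⊤ := by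
        apply Submodule.eq_top_of_finrank_eq
        rw [finrank_span_eq_card ht, Fintype.card_fin, hW]
      rw [htop, Submodule.map_subtype_top]
    have hbij : Function.Bijective g := by
      constructor
      · rintro ⟨⟨W, hW⟩, t, ht⟩ ⟨⟨W', hW'⟩, t', ht'⟩ h
        have hcoe : (fun i => (t i : V)) = fun i => (t' i : V) := congrArg Subtype.val h
        have hWW : W = W' := by
          rw [← hspan W hW t ht, ← hspan W' hW' t' ht', hcoe]
        subst hWW
        have ht2 : t = t' := funext fun i => Subtype.ext (congrFun hcoe i)
        subst ht2
        rfl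
      · rintro ⟨s, hs⟩
        exact ⟨⟨⟨Submodule.span F (Set.range s), by
          rw [finrank_span_eq_card hs, Fintype.card_fin]⟩,
          fun i => ⟨s i, Submodule.subset_span (Set.mem_range_self i)⟩,
          LinearIndependent.of_comp (Submodule.span F (Set.range s)).subtype hs⟩, rfl⟩
    have e := (Equiv.ofBijective g hbij).symm
    have step : ∀ W : {W : Submodule F V // finrank F ↥W = k},
        Nat.card {t : Fin k → ↥W.1 // LinearIndependent F t}
          = ∏ i : Fin k, (q ^ k - q ^ (i : ℕ)) := by
      intro W
      have h := card_linearIndependent (K := F) (V := ↥W.1) (k := k) (le_of_eq W.2.symm)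
      rwa [W.2] at h
    haveI : Fintype {W : Submodule F V // finrank F ↥W = k} := Fintype.ofFinite _
    have hsig : Nat.card (Σ W : {W : Submodule F V // finrank F ↥W = k},
        {t : Fin k → ↥W.1 // LinearIndependent F t})
        = Nat.card {W : Submodule F V // finrank F ↥W = k}
            * ∏ i : Fin k, (q ^ k - q ^ (i : ℕ)) := by
      haveI : ∀ W : {W : Submodule F V // finrank F ↥W = k},
          Fintype {t : Fin k → ↥W.1 // LinearIndependent F t} := fun W => Fintype.ofFinite _
      rw [Nat.card_eq_fintype_card, Fintype.card_sigma]
      rw [Finset.sum_congr rfl (fun W _ => by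
        rw [← Nat.card_eq_fintype_card, step W])]
      rw [Finset.sum_const, Finset.card_univ, smul_eq_mul, Nat.card_eq_fintype_card]
    have main : ∏ i : Fin k, (q ^ finrank F V - q ^ (i : ℕ))
        = Nat.card {W : Submodule F V // finrank F ↥W = k}
            * ∏ i : Fin k, (q ^ k - q ^ (i : ℕ)) := by
      rw [← card_linearIndependent (K := F) (V := V) hk, Nat.card_congr e, hsig]
    have hcast := congrArg (Nat.cast : ℕ → ℚ) main
    rw [Nat.cast_mul, cast_prod_pow_sub (by omega) hk, cast_prod_pow_sub (by omega) (le_refl k)] at hcast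
    have prodk_ne : (∏ i ∈ Finset.range k, ((q : ℚ) ^ k - (q : ℚ) ^ i)) ≠ 0 := by
      refine Finset.prod_ne_zero_iff.2 fun i hi => ?_
      rw [Finset.mem_range] at hi
      have h1 : (q : ℚ) ^ i < (q : ℚ) ^ k :=
        pow_lt_pow_right₀ (by exact_mod_cast hq) hi
      linarith
    have hcnt := qBinom_count_eq hq hk
    apply mul_right_cancel₀ prodk_ne
    rw [hcnt, hcast]
  · have : IsEmpty {W : Submodule F V // finrank F ↥W = k} :=
      ⟨fun W => hk (W.2 ▸ W.1.finrank_le)⟩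
    rw [Nat.card_of_isEmpty, qBinom_nat_lt (by omega)]
    simp

lemma finrank_map_mkQ_add {B W : Submodule F V} (h : B ≤ W) :
    finrank F ↥(W.map B.mkQ) + finrank F ↥B = finrank F ↥W := by
  haveI : Module.Finite F V := (by infer_instance : Module.Finite F V)
  have rk := LinearMap.finrank_range_add_finrank_ker (B.mkQ.comp W.subtype)
  rw [LinearMap.range_comp, Submodule.range_subtype, LinearMap.ker_comp, Submodule.ker_mkQ,
    (Submodule.comapSubtypeEquivOfLe h).finrank_eq] at rk
  exact rk

lemma card_superspaces {B : Submodule F V} {a : ℕ} (hba : finrank F ↥B ≤ a) :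
    (Nat.card {W : Submodule F V // B ≤ W ∧ finrank F ↥W = a} : ℚ)
      = qBinom (Fintype.card F) ((finrank F V - finrank F ↥B : ℕ) : ℤ) (a - finrank F ↥B) := by
  classical
  haveI : Module.Finite F V := (by infer_instance : Module.Finite F V)
  haveI : Finite (V ⧸ B) := Finite.of_surjective _ (Submodule.mkQ_surjective B)
  have hle : ∀ W' : Submodule F (V ⧸ B), B ≤ W'.comap B.mkQ := by
    intro W' x hx
    have hx0 : B.mkQ x = 0 := by rwa [← LinearMap.mem_ker, Submodule.ker_mkQ]
    simp [Submodule.mem_comap, hx0]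
  let e : {W : Submodule F V // B ≤ W ∧ finrank F ↥W = a} ≃
      {W' : Submodule F (V ⧸ B) // finrank F ↥W' = a - finrank F ↥B} :=
    { toFun := fun W => ⟨W.1.map B.mkQ, by
        have h := finrank_map_mkQ_add W.2.1
        have := W.2.2
        omega⟩
      invFun := fun W' => ⟨W'.1.comap B.mkQ, hle W'.1, by
        have hmap : (W'.1.comap B.mkQ).map B.mkQ = W'.1 :=
          Submodule.map_comap_eq_of_surjective (Submodule.mkQ_surjective B) _
        have h := finrank_map_mkQ_add (hle W'.1)
        rw [hmap] at h
        have := W'.2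
        omega⟩
      left_inv := fun W => by
        apply Subtype.ext
        dsimp only
        rw [Submodule.comap_map_mkQ]
        exact sup_eq_right.2 W.2.1
      right_inv := fun W' => by
        apply Subtype.ext
        exact Submodule.map_comap_eq_of_surjective (Submodule.mkQ_surjective B) _ }
  rw [Nat.card_congr e, card_finrank_subspaces]
  have hq := Submodule.finrank_quotient_add_finrank B
  rw [show finrank F (V ⧸ B) = finrank F V - finrank F ↥B by omega]

lemma card_superspaces_empty {B : Submodule F V} {a : ℕ} (hba : a < finrank F ↥B) :
    Nat.card {W : Submodule F V // B ≤ W ∧ finrank F ↥W = a} = 0 := by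
  haveI : Module.Finite F V := (by infer_instance : Module.Finite F V)
  have : IsEmpty {W : Submodule F V // B ≤ W ∧ finrank F ↥W = a} := ⟨fun W => by
    have h := Submodule.finrank_mono W.2.1
    omega⟩
  exact Nat.card_of_isEmpty

lemma card_subspaces_le (E : Submodule F V) (j : ℕ) :
    (Nat.card {D : Submodule F V // D ≤ E ∧ finrank F ↥D = j} : ℚ)
      = qBinom (Fintype.card F) ((finrank F ↥E : ℕ) : ℤ) j := by
  classical
  haveI : Module.Finite F V := (by infer_instance : Module.Finite F V)
  let e : {D : Submodule F V // D ≤ E ∧ finrank F ↥D = j} ≃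
      {D' : Submodule F ↥E // finrank F ↥D' = j} :=
    { toFun := fun D => ⟨D.1.comap E.subtype, by
        rw [(Submodule.comapSubtypeEquivOfLe D.2.1).finrank_eq]
        exact D.2.2⟩
      invFun := fun D' => ⟨D'.1.map E.subtype, Submodule.map_subtype_le _ _, by
        rw [← (Submodule.equivMapOfInjective E.subtype (Submodule.injective_subtype E)
          D'.1).finrank_eq]
        exact D'.2⟩
      left_inv := fun D => by
        apply Subtype.ext
        dsimp only
        rw [Submodule.map_comap_subtype]
        exact inf_eq_right.2 D.2.1
      right_inv := fun D' => by
        apply Subtype.ext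
        dsimp only
        rw [Submodule.comap_map_eq, Submodule.ker_subtype, sup_bot_eq] }
  rw [Nat.card_congr e, card_finrank_subspaces]

end Counting


section Tensor

variable {F : Type*} [Field F] [Fintype F] {R : ℕ} {n : Fin R → ℕ}

/-- The slice of a tensor in direction `i` through the point `m`. -/
def slice (n : Fin R → ℕ) (i : Fin R) (m : ∀ j, Fin (n j)) (X : TSpace F n) :
    Fin (n i) → F :=
  fun t => X (Function.update m i t)

lemma slice_add (i : Fin R) (m : ∀ j, Fin (n j)) (X Y : TSpace F n) :
    slice n i m (X + Y) = slice n i m X + slice n i m Y := rfl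

lemma slice_smul (i : Fin R) (m : ∀ j, Fin (n j)) (c : F) (X : TSpace F n) :
    slice n i m (c • X) = c • slice n i m X := rfl

/-- The "box" submodule: all arrays whose `i`-slices lie in `U i`. -/
def boxSub (n : Fin R → ℕ) (U : ∀ i, Submodule F (Fin (n i) → F)) :
    Submodule F (TSpace F n) where
  carrier := {X | ∀ (i : Fin R) (m : ∀ j, Fin (n j)), slice n i m X ∈ U i}
  add_mem' := fun ha hb i m => by
    rw [slice_add]
    exact (U i).add_mem (ha i m) (hb i m)
  zero_mem' := fun i m => (U i).zero_mem
  smul_mem' := fun c X hX i m => by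
    rw [slice_smul]
    exact (U i).smul_mem c (hX i m)

/-- The `i`-th factor of the closure of `D`. -/
def clSub (n : Fin R → ℕ) (i : Fin R) (D : Submodule F (TSpace F n)) :
    Submodule F (Fin (n i) → F) :=
  Submodule.span F {v | ∃ X ∈ D, ∃ m, v = slice n i m X}

lemma simpleTensor_apply_decomp (i : Fin R) (x : ∀ j, Fin (n j) → F) (m : ∀ j, Fin (n j)) :
    simpleTensor n x m = x i (m i) * ∏ j ∈ Finset.univ.erase i, x j (m j) :=
  (Finset.mul_prod_erase Finset.univ _ (Finset.mem_univ i)).symm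

lemma slice_simpleTensor (i : Fin R) (m : ∀ j, Fin (n j)) (x : ∀ j, Fin (n j) → F) :
    slice n i m (simpleTensor n x) = (∏ j ∈ Finset.univ.erase i, x j (m j)) • x i := by
  funext t
  simp only [slice, Pi.smul_apply, smul_eq_mul]
  rw [simpleTensor_apply_decomp i, Function.update_self, mul_comm]
  congr 1
  refine Finset.prod_congr rfl fun j hj => ?_
  rw [Function.update_of_ne (Finset.ne_of_mem_erase hj)]

/-- The coordinatewise projection operator. -/
def Pop (n : Fin R → ℕ) (i : Fin R) (π : (Fin (n i) → F) →ₗ[F] (Fin (n i) → F)) :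
    TSpace F n →ₗ[F] TSpace F n where
  toFun X := fun m => π (slice n i m X) (m i)
  map_add' X Y := funext fun m => by
    show π (slice n i m (X + Y)) (m i)
      = π (slice n i m X) (m i) + π (slice n i m Y) (m i)
    rw [slice_add, map_add]
    rfl
  map_smul' c X := funext fun m => by
    show π (slice n i m (c • X)) (m i) = c • π (slice n i m X) (m i)
    rw [slice_smul, map_smul]
    rfl

lemma Pop_apply_of_fixed (i : Fin R) (π : (Fin (n i) → F) →ₗ[F] (Fin (n i) → F))
    (X : TSpace F n) (h : ∀ m, π (slice n i m X) = slice n i m X) :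
    Pop n i π X = X := by
  funext m
  show π (slice n i m X) (m i) = X m
  rw [h m]
  show X (Function.update m i (m i)) = X m
  rw [Function.update_eq_self]

lemma Pop_simpleTensor (i : Fin R) (π : (Fin (n i) → F) →ₗ[F] (Fin (n i) → F))
    (x : ∀ j, Fin (n j) → F) :
    Pop n i π (simpleTensor n x) = simpleTensor n (Function.update x i (π (x i))) := by
  funext m
  show π (slice n i m (simpleTensor n x)) (m i) = _
  rw [slice_simpleTensor, map_smul, simpleTensor_apply_decomp i, Function.update_self]
  have : ∀ j ∈ Finset.univ.erase i, Function.update x i (π (x i)) j (m j) = x j (m j) :=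
    fun j hj => by rw [Function.update_of_ne (Finset.ne_of_mem_erase hj)]
  rw [Finset.prod_congr rfl this]
  show (∏ j ∈ Finset.univ.erase i, x j (m j)) * π (x i) (m i) = _
  ring

lemma tensor_expansion (X : TSpace F n) :
    X = ∑ m' : ∀ j, Fin (n j), X m' • simpleTensor n (fun j => Pi.single (m' j) (1 : F)) := by
  funext m
  rw [Finset.sum_apply]
  have key : ∀ m' : ∀ j, Fin (n j),
      (X m' • simpleTensor n fun j => Pi.single (m' j) (1 : F)) m
        = if m' = m then X m else 0 := by
    intro m'
    have h1 : simpleTensor n (fun j => Pi.single (m' j) (1 : F)) m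
        = if m' = m then 1 else 0 := by
      rw [simpleTensor]
      have h2 : ∀ j, (Pi.single (m' j) (1 : F) : Fin (n j) → F) (m j)
          = if m j = m' j then 1 else 0 := fun j => by rw [Pi.single_apply]
      rw [Finset.prod_congr rfl fun j _ => h2 j, Finset.prod_boole]
      by_cases h : m' = m
      · subst h
        simp
      · rw [if_neg, if_neg h]
        intro hall
        exact h (funext fun j => (hall j (Finset.mem_univ j)).symm)
    rw [Pi.smul_apply, h1, smul_eq_mul]
    by_cases h : m' = m
    · subst h
      simp
    · simp [h]
  rw [Finset.sum_congr rfl fun m' _ => key m', Finset.sum_ite_eq' Finset.univ m fun _ => X m]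
  simp

/-- The closure anticode equals the box submodule. -/
lemma closureAnticode_eq_boxSub (U : ∀ i, Submodule F (Fin (n i) → F)) :
    closureAnticode n U = boxSub n U := by
  apply le_antisymm
  · rw [closureAnticode, Submodule.span_le]
    rintro X ⟨x, hx, rfl⟩
    intro i m
    rw [slice_simpleTensor]
    exact (U i).smul_mem _ (hx i)
  · intro X hX
    have hproj : ∀ i : Fin R, ∃ π : (Fin (n i) → F) →ₗ[F] (Fin (n i) → F),
        (∀ v, π v ∈ U i) ∧ ∀ v ∈ U i, π v = v := by
      intro i
      obtain ⟨W, hW⟩ := Submodule.exists_isCompl (U i)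
      refine ⟨(U i).subtype ∘ₗ (U i).projectionOnto W hW, fun v => ?_, fun v hv => ?_⟩
      · exact ((U i).projectionOnto W hW v).2
      · show (((U i).projectionOnto W hW) v : Fin (n i) → F) = v
        rw [show v = ((⟨v, hv⟩ : U i) : Fin (n i) → F) from rfl,
          Submodule.linearProjOfIsCompl_apply_left hW]
    choose π hπ1 hπ2 using hproj
    have key : ∀ k : ℕ, k ≤ R → X ∈ Submodule.span F
        {Y : TSpace F n | ∃ x : ∀ j, Fin (n j) → F,
          (∀ j : Fin R, (j : ℕ) < k → x j ∈ U j) ∧ Y = simpleTensor n x} := by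
      intro k
      induction k with
      | zero =>
        intro _
        rw [tensor_expansion (F := F) (n := n) X]
        refine Submodule.sum_mem _ fun m' _ => Submodule.smul_mem _ _ (Submodule.subset_span ?_)
        exact ⟨_, fun j hj => absurd hj (by omega), rfl⟩
      | succ k ih =>
        intro hk1
        have hXk := ih (by omega)
        set i : Fin R := ⟨k, by omega⟩ with hidef
        have hfix : Pop n i (π i) X = X :=
          Pop_apply_of_fixed i (π i) X fun m => hπ2 i _ (hX i m)
        have hmem : Pop n i (π i) X ∈ Submodule.map (Pop n i (π i)) (Submodule.span F
            {Y : TSpace F n | ∃ x : ∀ j, Fin (n j) → F,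
              (∀ j : Fin R, (j : ℕ) < k → x j ∈ U j) ∧ Y = simpleTensor n x}) :=
          ⟨X, hXk, rfl⟩
        rw [Submodule.map_span] at hmem
        rw [← hfix]
        refine Submodule.span_mono ?_ hmem
        rintro Y ⟨Z, ⟨x, hx, rfl⟩, rfl⟩
        refine ⟨Function.update x i (π i (x i)), ?_, Pop_simpleTensor i (π i) x⟩
        intro j hj
        rcases eq_or_ne j i with rfl | hne
        · rw [Function.update_self]
          exact hπ1 i (x i)
        · rw [Function.update_of_ne hne]
          have hjk : (j : ℕ) ≠ k := fun h => hne (Fin.ext h)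
          exact hx j (by omega)
    have hfin := key R le_rfl
    rw [closureAnticode]
    refine Submodule.span_mono ?_ hfin
    rintro Y ⟨x, hx, hY⟩
    exact ⟨x, fun j => hx j j.isLt, hY⟩

lemma mem_closureAnticode_iff (U : ∀ i, Submodule F (Fin (n i) → F)) (X : TSpace F n) :
    X ∈ closureAnticode n U ↔ ∀ i m, slice n i m X ∈ U i := by
  rw [closureAnticode_eq_boxSub]
  rfl

lemma le_closureAnticode_iff {D : Submodule F (TSpace F n)}
    {U : ∀ i, Submodule F (Fin (n i) → F)} :
    D ≤ closureAnticode n U ↔ ∀ i, clSub n i D ≤ U i := by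
  constructor
  · intro h i
    rw [clSub, Submodule.span_le]
    rintro v ⟨X, hX, m, rfl⟩
    exact (mem_closureAnticode_iff U X).1 (h hX) i m
  · intro h X hX
    rw [mem_closureAnticode_iff]
    intro i m
    exact h i (Submodule.subset_span ⟨X, hX, m, rfl⟩)

lemma clSub_mono {D D' : Submodule F (TSpace F n)} (h : D ≤ D') (i : Fin R) :
    clSub n i D ≤ clSub n i D' := by
  apply Submodule.span_mono
  rintro v ⟨X, hX, m, rfl⟩
  exact ⟨X, h hX, m, rfl⟩

lemma le_cl_self (D : Submodule F (TSpace F n)) :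
    D ≤ closureAnticode n (fun i => clSub n i D) :=
  le_closureAnticode_iff.2 fun _ => le_rfl

lemma clSub_closureAnticode (hn : ∀ j, 1 ≤ n j) (U : ∀ i, Submodule F (Fin (n i) → F))
    (hU : ∀ j, U j ≠ ⊥) (i : Fin R) :
    clSub n i (closureAnticode n U) = U i := by
  apply le_antisymm
  · rw [clSub, Submodule.span_le]
    rintro v ⟨X, hX, m, rfl⟩
    exact (mem_closureAnticode_iff U X).1 hX i m
  · intro u hu
    rcases eq_or_ne u 0 with rfl | hu0
    · exact (clSub n i _).zero_mem
    have hex : ∀ j, ∃ v : Fin (n j) → F, v ∈ U j ∧ v ≠ 0 := by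
      intro j
      obtain ⟨v, hv1, hv2⟩ := (Submodule.ne_bot_iff (U j)).1 (hU j)
      exact ⟨v, hv1, hv2⟩
    choose v hv1 hv2 using hex
    have hm : ∀ j, ∃ t : Fin (n j), v j t ≠ 0 := fun j => Function.ne_iff.1 (hv2 j)
    choose m0 hm0 using hm
    set x : ∀ j, Fin (n j) → F := Function.update v i u with hx
    have hxU : ∀ j, x j ∈ U j := by
      intro j
      rcases eq_or_ne j i with rfl | hne
      · rw [hx, Function.update_self]
        exact hu
      · rw [hx, Function.update_of_ne hne]
        exact hv1 j
    have hst : simpleTensor n x ∈ closureAnticode n U :=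
      Submodule.subset_span ⟨x, hxU, rfl⟩
    have hslice : slice n i m0 (simpleTensor n x) ∈ clSub n i (closureAnticode n U) :=
      Submodule.subset_span ⟨simpleTensor n x, hst, m0, rfl⟩
    rw [slice_simpleTensor] at hslice
    have hxi : x i = u := by rw [hx, Function.update_self]
    rw [hxi] at hslice
    set c : F := ∏ j ∈ Finset.univ.erase i, x j (m0 j) with hc
    have hc0 : c ≠ 0 := by
      rw [hc]
      refine Finset.prod_ne_zero_iff.2 fun j hj => ?_
      rw [hx, Function.update_of_ne (Finset.ne_of_mem_erase hj)]
      exact hm0 j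
    have := (clSub n i (closureAnticode n U)).smul_mem c⁻¹ hslice
    rwa [smul_smul, inv_mul_cancel₀ hc0, one_smul] at this

lemma clSub_ne_bot {D : Submodule F (TSpace F n)} (hD : D ≠ ⊥) (i : Fin R) :
    clSub n i D ≠ ⊥ := by
  obtain ⟨X, hX, hX0⟩ := (Submodule.ne_bot_iff D).1 hD
  obtain ⟨m, hm⟩ := Function.ne_iff.1 hX0
  refine (Submodule.ne_bot_iff _).2 ⟨slice n i m X, Submodule.subset_span ⟨X, hX, m, rfl⟩, ?_⟩
  intro h
  apply hm
  have := congrFun h (m i)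
  rwa [show slice n i m X (m i) = X m by
    show X (Function.update m i (m i)) = X m
    rw [Function.update_eq_self]] at this

end Tensor



section Assembly

open Module

variable {F : Type*} [Field F] [Fintype F] {R : ℕ} {n : Fin R → ℕ}

lemma finrank_clSub_pos {D : Submodule F (TSpace F n)} (hD : D ≠ ⊥) (i : Fin R) :
    1 ≤ finrank F ↥(clSub n i D) := by
  by_contra h
  have h0 : finrank F ↥(clSub n i D) = 0 := by omega
  exact clSub_ne_bot hD i (Submodule.finrank_eq_zero.1 h0)

lemma anticodesOf_factors {𝔞 : Fin R → ℕ} (hn : ∀ i, 1 ≤ n i) (h𝔞 : ∀ i, 1 ≤ 𝔞 i)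
    {U : ∀ i, Submodule F (Fin (n i) → F)} (hU : ∀ i, finrank F ↥(U i) = 𝔞 i) (i : Fin R) :
    clSub n i (closureAnticode n U) = U i := by
  apply clSub_closureAnticode hn
  intro j hbot
  have h := hU j
  rw [hbot, finrank_bot] at h
  have := h𝔞 j
  omega

lemma card_anticodesOf_above (hn : ∀ i, 1 ≤ n i) {𝔞 : Fin R → ℕ} (h𝔞 : ∀ i, 1 ≤ 𝔞 i)
    {D : Submodule F (TSpace F n)} (hD : D ≠ ⊥) :
    (Nat.card {A : Submodule F (TSpace F n) // A ∈ closureAnticodesOf n 𝔞 ∧ D ≤ A} : ℚ)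
      = ∏ i, (if finrank F ↥(clSub n i D) ≤ 𝔞 i
          then qBinom (Fintype.card F)
            ((n i - finrank F ↥(clSub n i D) : ℕ) : ℤ) (𝔞 i - finrank F ↥(clSub n i D))
          else 0) := by
  classical
  let e : {A : Submodule F (TSpace F n) // A ∈ closureAnticodesOf n 𝔞 ∧ D ≤ A} ≃
      ∀ i, {U : Submodule F (Fin (n i) → F) // clSub n i D ≤ U ∧ finrank F ↥U = 𝔞 i} :=
    { toFun := fun A i => ⟨clSub n i A.1, by
        refine ⟨clSub_mono A.2.2 i, ?_⟩
        obtain ⟨U, hU, hAeq⟩ := A.2.1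
        rw [hAeq, anticodesOf_factors hn h𝔞 hU i]
        exact hU i⟩
      invFun := fun Us => ⟨closureAnticode n (fun i => (Us i).1),
        ⟨⟨fun i => (Us i).1, fun i => (Us i).2.2, rfl⟩,
          le_closureAnticode_iff.2 fun i => (Us i).2.1⟩⟩
      left_inv := fun A => by
        apply Subtype.ext
        obtain ⟨A', hmem, hDA⟩ := A
        obtain ⟨U, hU, rfl⟩ := hmem
        dsimp only
        congr 1
        funext i
        exact anticodesOf_factors hn h𝔞 hU i
      right_inv := fun Us => by
        funext i
        apply Subtype.ext
        exact anticodesOf_factors hn h𝔞 (fun j => (Us j).2.2) i }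
  rw [Nat.card_congr e, Nat.card_pi, Nat.cast_prod]
  refine Finset.prod_congr rfl fun i _ => ?_
  by_cases hle : finrank F ↥(clSub n i D) ≤ 𝔞 i
  · rw [if_pos hle]
    have h := card_superspaces (B := clSub n i D) (a := 𝔞 i) hle
    rw [Module.finrank_fin_fun] at h
    exact h
  · rw [if_neg hle, card_superspaces_empty (by omega), Nat.cast_zero]

lemma mem_anticodesOf_cl_iff (hn : ∀ i, 1 ≤ n i) {𝔠 : Fin R → ℕ} (h𝔠 : ∀ i, 1 ≤ 𝔠 i)
    {D : Submodule F (TSpace F n)} (hD : D ≠ ⊥) :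
    closureAnticode n (fun i => clSub n i D) ∈ closureAnticodesOf n 𝔠
      ↔ ∀ i, finrank F ↥(clSub n i D) = 𝔠 i := by
  constructor
  · rintro ⟨V, hV, hEq⟩ i
    have h1 : clSub n i (closureAnticode n (fun i => clSub n i D)) = clSub n i D :=
      clSub_closureAnticode hn _ (fun j => clSub_ne_bot hD j) i
    have h2 := anticodesOf_factors hn h𝔠 hV i
    rw [← hEq] at h2
    have h3 : clSub n i D = V i := by rw [← h1, h2]
    rw [h3, hV i]
  · intro h
    exact ⟨fun i => clSub n i D, h, rfl⟩

lemma minimal_iff (hn : ∀ i, 1 ≤ n i) {𝔠 : Fin R → ℕ} (h𝔠 : ∀ i, 1 ≤ 𝔠 i)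
    {A : Submodule F (TSpace F n)} (hA : A ∈ closureAnticodesOf n 𝔠)
    (C : Submodule F (TSpace F n)) {j : ℕ} (hj : 1 ≤ j) (D : Submodule F (TSpace F n)) :
    (D ≤ C ⊓ A ∧ finrank F ↥D = j ∧
      ∀ B ∈ ClosureAnticodes n, D ≤ B → B ≤ A → B = A)
    ↔ (D ≤ C ∧ finrank F ↥D = j ∧ closureAnticode n (fun i => clSub n i D) = A) := by
  obtain ⟨U, hU, rfl⟩ := hA
  constructor
  · rintro ⟨hDCA, hrk, hmin⟩
    have hD0 : D ≠ ⊥ := fun h => by rw [h, finrank_bot] at hrk; omega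
    refine ⟨hDCA.trans inf_le_left, hrk, ?_⟩
    apply hmin
    · exact ⟨fun i => clSub n i D, rfl⟩
    · exact le_cl_self D
    · apply le_closureAnticode_iff.2
      intro i
      rw [clSub_closureAnticode hn _ (fun j => clSub_ne_bot hD0 j) i]
      exact le_closureAnticode_iff.1 (hDCA.trans inf_le_right) i
  · rintro ⟨hDC, hrk, hcl⟩
    have hD0 : D ≠ ⊥ := fun h => by rw [h, finrank_bot] at hrk; omega
    refine ⟨le_inf hDC (hcl ▸ le_cl_self D), hrk, ?_⟩
    rintro B ⟨V, rfl⟩ hDB hBA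
    apply le_antisymm hBA
    rw [← hcl]
    apply le_closureAnticode_iff.2
    intro i
    rw [clSub_closureAnticode hn _ (fun j => clSub_ne_bot hD0 j) i]
    exact le_closureAnticode_iff.1 hDB i

lemma WCl_eq_card (hn : ∀ i, 1 ≤ n i) (C : Submodule F (TSpace F n)) {j : ℕ} (hj : 1 ≤ j)
    {𝔠 : Fin R → ℕ} (h𝔠 : ∀ i, 1 ≤ 𝔠 i) :
    WCl n j C 𝔠 = (Nat.card {D : Submodule F (TSpace F n) //
      D ≤ C ∧ finrank F ↥D = j ∧ ∀ i, finrank F ↥(clSub n i D) = 𝔠 i} : ℚ) := by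
  classical
  haveI : Fintype (Submodule F (TSpace F n)) := Fintype.ofFinite _
  rw [WCl, finsum_mem_eq_finite_toFinset_sum _ (Set.toFinite _)]
  set T := (Set.toFinite (closureAnticodesOf (F := F) n 𝔠)).toFinset with hT
  set cl : Submodule F (TSpace F n) → Submodule F (TSpace F n) :=
    fun D => closureAnticode n (fun i => clSub n i D) with hcl
  set 𝒟 : Finset (Submodule F (TSpace F n)) :=
    Finset.univ.filter (fun D => D ≤ C ∧ finrank F ↥D = j ∧
      ∀ i, finrank F ↥(clSub n i D) = 𝔠 i) with h𝒟
  have hmaps : ∀ D ∈ 𝒟, cl D ∈ T := by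
    intro D hD
    rw [h𝒟, Finset.mem_filter] at hD
    rw [hT, Set.Finite.mem_toFinset]
    exact ⟨fun i => clSub n i D, hD.2.2.2, rfl⟩
  have hstep : ∀ A ∈ T, (Nat.card {D : Submodule F (TSpace F n) //
      D ≤ C ⊓ A ∧ finrank F ↥D = j ∧
        ∀ B ∈ ClosureAnticodes n, D ≤ B → B ≤ A → B = A} : ℚ)
      = (((𝒟.filter (fun D => cl D = A)).card : ℕ) : ℚ) := by
    intro A hA
    rw [hT, Set.Finite.mem_toFinset] at hA
    congr 1
    rw [Nat.card_eq_fintype_card, Fintype.card_subtype]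
    congr 1
    ext D
    simp only [h𝒟, Finset.mem_filter, Finset.mem_univ, true_and]
    rw [minimal_iff hn h𝔠 hA C hj D]
    constructor
    · rintro ⟨h1, h2, h3⟩
      refine ⟨⟨h1, h2, ?_⟩, h3⟩
      have hD0 : D ≠ ⊥ := fun h => by rw [h, finrank_bot] at h2; omega
      intro i
      exact ((mem_anticodesOf_cl_iff hn h𝔠 hD0).1 (h3 ▸ hA)) i
    · rintro ⟨⟨h1, h2, _⟩, h3⟩
      exact ⟨h1, h2, h3⟩
  rw [Finset.sum_congr rfl hstep, ← Nat.cast_sum]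
  congr 1
  rw [Nat.card_eq_fintype_card, Fintype.card_subtype]
  rw [show Finset.univ.filter (fun D : Submodule F (TSpace F n) =>
      D ≤ C ∧ finrank F ↥D = j ∧ ∀ i, finrank F ↥(clSub n i D) = 𝔠 i) = 𝒟 from h𝒟.symm]
  exact (Finset.card_eq_sum_card_fiberwise hmaps).symm

lemma BCl_eq_sum (hn : ∀ i, 1 ≤ n i) (C : Submodule F (TSpace F n)) {j : ℕ} (hj : 1 ≤ j)
    {𝔞 : Fin R → ℕ} (h𝔞 : ∀ i, 1 ≤ 𝔞 i ∧ 𝔞 i ≤ n i) :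
    BCl n j C 𝔞 = ∑ 𝔠 ∈ Finset.Icc 1 𝔞, WCl n j C 𝔠 *
      ∏ i, qBinom (Fintype.card F) ((n i : ℤ) - 𝔠 i) (𝔞 i - 𝔠 i) := by
  classical
  haveI : Fintype (Submodule F (TSpace F n)) := Fintype.ofFinite _
  set q := Fintype.card F with hq
  set T := (Set.toFinite (closureAnticodesOf (F := F) n 𝔞)).toFinset with hT
  set 𝒟 : Finset (Submodule F (TSpace F n)) :=
    Finset.univ.filter (fun D => D ≤ C ∧ finrank F ↥D = j) with h𝒟
  set dd : Submodule F (TSpace F n) → Fin R → ℕ :=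
    fun D i => finrank F ↥(clSub n i D) with hdd
  rw [BCl, finsum_mem_eq_finite_toFinset_sum _ (Set.toFinite _)]
  have h2 : ∀ A ∈ T, qBinom q ((finrank F ↥(C ⊓ A) : ℕ) : ℤ) j
      = (((𝒟.filter (fun D => D ≤ A)).card : ℕ) : ℚ) := by
    intro A _
    rw [← card_subspaces_le (C ⊓ A) j]
    congr 1
    rw [Nat.card_eq_fintype_card, Fintype.card_subtype]
    congr 1
    ext D
    simp only [h𝒟, Finset.mem_filter, Finset.mem_univ, true_and, le_inf_iff]
    tauto
  rw [Finset.sum_congr rfl h2, ← Nat.cast_sum]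
  have h3 : (∑ A ∈ T, (𝒟.filter (fun D => D ≤ A)).card)
      = ∑ D ∈ 𝒟, (T.filter (fun A => D ≤ A)).card := by
    simp only [Finset.card_filter]
    exact Finset.sum_comm
  rw [h3, Nat.cast_sum]
  have h4 : ∀ D ∈ 𝒟, (((T.filter (fun A => D ≤ A)).card : ℕ) : ℚ)
      = ∏ i, (if dd D i ≤ 𝔞 i
          then qBinom q ((n i - dd D i : ℕ) : ℤ) (𝔞 i - dd D i) else 0) := by
    intro D hD
    rw [h𝒟, Finset.mem_filter] at hD
    have hD0 : D ≠ ⊥ := fun h => by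
      have := hD.2.2
      rw [h, finrank_bot] at this
      omega
    rw [← card_anticodesOf_above hn (fun i => (h𝔞 i).1) hD0]
    congr 1
    rw [Nat.card_eq_fintype_card, Fintype.card_subtype]
    congr 1
    ext A
    simp only [hT, Set.Finite.mem_toFinset, Finset.mem_filter, Finset.mem_univ, true_and]
  rw [Finset.sum_congr rfl h4]
  have h5 : ∀ D ∈ 𝒟, (∏ i, (if dd D i ≤ 𝔞 i
        then qBinom q ((n i - dd D i : ℕ) : ℤ) (𝔞 i - dd D i) else 0))
      = ∑ 𝔠 ∈ Finset.Icc 1 𝔞, (if dd D = 𝔠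
          then ∏ i, qBinom q ((n i - 𝔠 i : ℕ) : ℤ) (𝔞 i - 𝔠 i) else 0) := by
    intro D hD
    rw [h𝒟, Finset.mem_filter] at hD
    have hD0 : D ≠ ⊥ := fun h => by
      have := hD.2.2
      rw [h, finrank_bot] at this
      omega
    rw [Finset.sum_ite_eq (Finset.Icc 1 𝔞) (dd D)
      (fun 𝔠 => ∏ i, qBinom q ((n i - 𝔠 i : ℕ) : ℤ) (𝔞 i - 𝔠 i))]
    by_cases hle : ∀ i, dd D i ≤ 𝔞 i
    · rw [if_pos (by
        rw [Finset.mem_Icc]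
        exact ⟨fun i => finrank_clSub_pos hD0 i, fun i => hle i⟩)]
      exact Finset.prod_congr rfl fun i _ => if_pos (hle i)
    · rw [if_neg (by
        intro hmem
        rw [Finset.mem_Icc] at hmem
        exact hle fun i => hmem.2 i)]
      push_neg at hle
      obtain ⟨i0, hi0⟩ := hle
      exact Finset.prod_eq_zero (Finset.mem_univ i0) (if_neg (by omega))
  rw [Finset.sum_congr rfl h5, Finset.sum_comm]
  refine Finset.sum_congr rfl fun 𝔠 h𝔠mem => ?_
  rw [Finset.mem_Icc] at h𝔠mem
  have h𝔠1 : ∀ i, 1 ≤ 𝔠 i := fun i => h𝔠mem.1 i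
  have h𝔠n : ∀ i, 𝔠 i ≤ n i := fun i => le_trans (h𝔠mem.2 i) (h𝔞 i).2
  rw [← Finset.sum_filter, Finset.sum_const, nsmul_eq_mul]
  rw [WCl_eq_card hn C hj h𝔠1]
  have hcards : (𝒟.filter (fun D => dd D = 𝔠)).card
      = Nat.card {D : Submodule F (TSpace F n) //
        D ≤ C ∧ finrank F ↥D = j ∧ ∀ i, finrank F ↥(clSub n i D) = 𝔠 i} := by
    rw [Nat.card_eq_fintype_card, Fintype.card_subtype]
    congr 1
    ext D
    simp only [h𝒟, Finset.mem_filter, Finset.mem_univ, true_and, hdd, funext_iff]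
    tauto
  rw [hcards]
  congr 1
  refine Finset.prod_congr rfl fun i _ => ?_
  rw [show ((n i : ℤ) - 𝔠 i) = (((n i - 𝔠 i : ℕ) : ℕ) : ℤ) by
    have := h𝔠n i
    omega]

lemma closureAnticode_bot (hR : 0 < R) :
    closureAnticode (F := F) n (fun _ => (⊥ : Submodule F (Fin (n _) → F))) = ⊥ := by
  rw [closureAnticode, Submodule.span_eq_bot]
  rintro X ⟨x, hx, rfl⟩
  funext m
  rw [simpleTensor]
  apply Finset.prod_eq_zero (Finset.mem_univ (⟨0, hR⟩ : Fin R))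
  have h0 : x ⟨0, hR⟩ = 0 := (Submodule.mem_bot F).1 (hx ⟨0, hR⟩)
  rw [h0]
  rfl

lemma anticodesOf_zero (hR : 0 < R) :
    closureAnticodesOf (F := F) n (0 : Fin R → ℕ) = {(⊥ : Submodule F (TSpace F n))} := by
  ext A
  simp only [closureAnticodesOf, Set.mem_setOf_eq, Set.mem_singleton_iff]
  constructor
  · rintro ⟨U, hU, rfl⟩
    have hbot : ∀ i, U i = ⊥ := fun i =>
      Submodule.finrank_eq_zero.1 (by simpa using hU i)
    rw [show U = fun i => (⊥ : Submodule F (Fin (n i) → F)) from funext hbot]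
    exact closureAnticode_bot hR
  · rintro rfl
    exact ⟨fun i => ⊥, fun i => by simp [finrank_bot], (closureAnticode_bot hR).symm⟩

lemma BCl_zero (hR : 0 < R) (C : Submodule F (TSpace F n)) {j : ℕ} (hj : 1 ≤ j) :
    BCl n j C (0 : Fin R → ℕ) = 0 := by
  rw [BCl, anticodesOf_zero hR, finsum_mem_singleton, inf_bot_eq, finrank_bot]
  exact qBinom_nat_lt (by omega)

lemma WCl_zero (hR : 0 < R) (C : Submodule F (TSpace F n)) {j : ℕ} (hj : 1 ≤ j) :
    WCl n j C (0 : Fin R → ℕ) = 0 := by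
  rw [WCl, anticodesOf_zero hR, finsum_mem_singleton]
  have : IsEmpty {D : Submodule F (TSpace F n) //
      D ≤ C ⊓ ⊥ ∧ finrank F ↥D = j ∧
        ∀ B ∈ ClosureAnticodes n, D ≤ B → B ≤ (⊥ : Submodule F (TSpace F n)) → B = ⊥} := by
    refine ⟨fun D => ?_⟩
    have h1 : D.1 = ⊥ := le_bot_iff.1 (D.2.1.trans inf_le_right)
    have h2 := D.2.2.1
    rw [h1, finrank_bot] at h2
    omega
  rw [Nat.card_of_isEmpty, Nat.cast_zero]

end Assembly



section Final

open Module

variable {F : Type*} [Field F] [Fintype F] {R : ℕ} {n : Fin R → ℕ}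

lemma WCl_eq_inversion (hn : ∀ i, 1 ≤ n i) (C : Submodule F (TSpace F n)) {j : ℕ} (hj : 1 ≤ j)
    {𝔟 : Fin R → ℕ} (h𝔟 : ∀ i, 1 ≤ 𝔟 i ∧ 𝔟 i ≤ n i) :
    WCl n j C 𝔟 = ∑ 𝔠 ∈ Finset.Icc 1 𝔟, BCl n j C 𝔠 *
      ∏ i, ((-1 : ℚ) ^ (𝔟 i - 𝔠 i) * (Fintype.card F : ℚ) ^ Nat.choose (𝔟 i - 𝔠 i) 2 *
        qBinom (Fintype.card F) ((n i : ℤ) - 𝔠 i) (𝔟 i - 𝔠 i)) := by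
  classical
  set q := Fintype.card F with hqdef
  have hq : 2 ≤ q := Fintype.one_lt_card
  set M : (Fin R → ℕ) → ℚ := fun 𝔠 => ∏ i,
    ((-1 : ℚ) ^ (𝔟 i - 𝔠 i) * (q : ℚ) ^ Nat.choose (𝔟 i - 𝔠 i) 2 *
      qBinom q ((n i : ℤ) - 𝔠 i) (𝔟 i - 𝔠 i)) with hM
  have hsub : ∀ 𝔠 ∈ Finset.Icc (1 : Fin R → ℕ) 𝔟, BCl n j C 𝔠 * M 𝔠
      = ∑ 𝔡 ∈ Finset.Icc (1 : Fin R → ℕ) 𝔟, (if 𝔡 ≤ 𝔠 then WCl n j C 𝔡 *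
          (∏ i, qBinom q ((n i : ℤ) - 𝔡 i) (𝔠 i - 𝔡 i)) * M 𝔠 else 0) := by
    intro 𝔠 h𝔠
    rw [Finset.mem_Icc] at h𝔠
    have h𝔠grid : ∀ i, 1 ≤ 𝔠 i ∧ 𝔠 i ≤ n i :=
      fun i => ⟨h𝔠.1 i, le_trans (h𝔠.2 i) (h𝔟 i).2⟩
    rw [BCl_eq_sum hn C hj h𝔠grid, Finset.sum_mul, ← Finset.sum_filter]
    have hIcc1 : Finset.Icc (1 : Fin R → ℕ) 𝔠
        = (Finset.Icc (1 : Fin R → ℕ) 𝔟).filter (fun 𝔡 => 𝔡 ≤ 𝔠) := by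
      ext 𝔡
      simp only [Finset.mem_Icc, Finset.mem_filter]
      constructor
      · rintro ⟨h1, h2⟩
        exact ⟨⟨h1, le_trans h2 h𝔠.2⟩, h2⟩
      · rintro ⟨⟨h1, _⟩, h2⟩
        exact ⟨h1, h2⟩
    rw [hIcc1]
  rw [Finset.sum_congr rfl hsub, Finset.sum_comm]
  have hinner : ∀ 𝔡 ∈ Finset.Icc (1 : Fin R → ℕ) 𝔟,
      (∑ 𝔠 ∈ Finset.Icc (1 : Fin R → ℕ) 𝔟, if 𝔡 ≤ 𝔠 then WCl n j C 𝔡 *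
        (∏ i, qBinom q ((n i : ℤ) - 𝔡 i) (𝔠 i - 𝔡 i)) * M 𝔠 else 0)
      = if 𝔡 = 𝔟 then WCl n j C 𝔟 else 0 := by
    intro 𝔡 h𝔡
    rw [Finset.mem_Icc] at h𝔡
    rw [← Finset.sum_filter]
    have hIcc2 : (Finset.Icc (1 : Fin R → ℕ) 𝔟).filter (fun 𝔠 => 𝔡 ≤ 𝔠)
        = Finset.Icc 𝔡 𝔟 := by
      ext 𝔠
      simp only [Finset.mem_Icc, Finset.mem_filter]
      constructor
      · rintro ⟨⟨_, h2⟩, h3⟩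
        exact ⟨h3, h2⟩
      · rintro ⟨h1, h2⟩
        exact ⟨⟨le_trans h𝔡.1 h1, h2⟩, h1⟩
    rw [hIcc2]
    have hfact : ∀ 𝔠 ∈ Finset.Icc 𝔡 𝔟, WCl n j C 𝔡 *
        (∏ i, qBinom q ((n i : ℤ) - 𝔡 i) (𝔠 i - 𝔡 i)) * M 𝔠
        = WCl n j C 𝔡 * ∏ i, (qBinom q ((n i : ℤ) - 𝔡 i) (𝔠 i - 𝔡 i) *
            ((-1 : ℚ) ^ (𝔟 i - 𝔠 i) * (q : ℚ) ^ Nat.choose (𝔟 i - 𝔠 i) 2 *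
              qBinom q ((n i : ℤ) - 𝔠 i) (𝔟 i - 𝔠 i))) := by
      intro 𝔠 _
      rw [hM, mul_assoc, ← Finset.prod_mul_distrib]
    rw [Finset.sum_congr rfl hfact, ← Finset.mul_sum]
    have hps := Finset.prod_univ_sum (fun i => Finset.Icc (𝔡 i) (𝔟 i))
      (fun i c => qBinom q ((n i : ℤ) - 𝔡 i) (c - 𝔡 i) *
        ((-1 : ℚ) ^ (𝔟 i - c) * (q : ℚ) ^ Nat.choose (𝔟 i - c) 2 *
          qBinom q ((n i : ℤ) - c) (𝔟 i - c)))
    rw [Pi.Icc_eq, ← hps]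
    have hcoord : ∀ i : Fin R, (∑ c ∈ Finset.Icc (𝔡 i) (𝔟 i),
        qBinom q ((n i : ℤ) - 𝔡 i) (c - 𝔡 i) *
          ((-1 : ℚ) ^ (𝔟 i - c) * (q : ℚ) ^ Nat.choose (𝔟 i - c) 2 *
            qBinom q ((n i : ℤ) - c) (𝔟 i - c)))
        = if 𝔡 i = 𝔟 i then 1 else 0 := by
      intro i
      have h1 : 𝔡 i ≤ n i := le_trans (h𝔡.2 i) (h𝔟 i).2
      have hrw : ∀ c ∈ Finset.Icc (𝔡 i) (𝔟 i),
          qBinom q ((n i : ℤ) - 𝔡 i) (c - 𝔡 i) *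
            ((-1 : ℚ) ^ (𝔟 i - c) * (q : ℚ) ^ Nat.choose (𝔟 i - c) 2 *
              qBinom q ((n i : ℤ) - c) (𝔟 i - c))
          = qBinom q ((n i - 𝔡 i : ℕ) : ℤ) (c - 𝔡 i) *
            ((-1 : ℚ) ^ (𝔟 i - c) * (q : ℚ) ^ Nat.choose (𝔟 i - c) 2 *
              qBinom q ((n i - c : ℕ) : ℤ) (𝔟 i - c)) := by
        intro c hc
        rw [Finset.mem_Icc] at hc
        have h2 : c ≤ n i := le_trans hc.2 (h𝔟 i).2
        rw [show (n i : ℤ) - 𝔡 i = ((n i - 𝔡 i : ℕ) : ℤ) by omega,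
          show (n i : ℤ) - c = ((n i - c : ℕ) : ℤ) by omega]
      rw [Finset.sum_congr rfl hrw]
      exact qBinom_inversion hq (h𝔡.2 i) (h𝔟 i).2
    rw [Finset.prod_congr rfl fun i _ => hcoord i, Fintype.prod_boole]
    by_cases h : 𝔡 = 𝔟
    · rw [if_pos (by intro i; rw [h]), if_pos h, mul_one]
      rw [h]
    · rw [if_neg (fun hall => h (funext hall)), if_neg h, mul_zero]
  rw [Finset.sum_congr rfl hinner,
    Finset.sum_ite_eq' (Finset.Icc (1 : Fin R → ℕ) 𝔟) 𝔟 (fun _ => WCl n j C 𝔟),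
    if_pos (Finset.mem_Icc.2 ⟨fun i => (h𝔟 i).1, le_rfl⟩)]

end Final


/-- Relations between the refined tensor binomial moments and the refined weight distribution
with respect to the closure-type anticodes. -/
theorem stmt15 {F : Type*} [Field F] [Fintype F] (r : ℕ) (n : Fin (r + 2) → ℕ)
    (hn1 : 2 ≤ n 0) (hmin : ∀ i, n 0 ≤ n i) (hmax : ∀ i, n i ≤ n (Fin.last (r + 1)))
    (C : Submodule F (TSpace F n)) (j : ℕ) (hj1 : 1 ≤ j) (hjk : j ≤ finrank F ↥C)
    (𝔞 𝔟 : Fin (r + 2) → ℕ)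
    (h𝔞 : (∀ i, 1 ≤ 𝔞 i ∧ 𝔞 i ≤ n i) ∨ 𝔞 = 0)
    (h𝔟 : (∀ i, 1 ≤ 𝔟 i ∧ 𝔟 i ≤ n i) ∨ 𝔟 = 0) :
    (BCl n j C 𝔞
      = ∑ᶠ 𝔠 ∈ {𝔠 : Fin (r + 2) → ℕ | (∀ i, 1 ≤ 𝔠 i ∧ 𝔠 i ≤ n i) ∧ 𝔠 ≤ 𝔞},
          WCl n j C 𝔠 * ∏ i, qBinom (Fintype.card F) ((n i : ℤ) - 𝔠 i) (𝔞 i - 𝔠 i)) ∧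
    (WCl n j C 𝔟
      = ∑ᶠ 𝔠 ∈ {𝔠 : Fin (r + 2) → ℕ | (∀ i, 1 ≤ 𝔠 i ∧ 𝔠 i ≤ n i) ∧ 𝔠 ≤ 𝔟},
          BCl n j C 𝔠 *
            ∏ i, ((-1 : ℚ) ^ (𝔟 i - 𝔠 i) *
              (Fintype.card F : ℚ) ^ Nat.choose (𝔟 i - 𝔠 i) 2 *
              qBinom (Fintype.card F) ((n i : ℤ) - 𝔠 i) (𝔟 i - 𝔠 i))) := by
  have hn : ∀ i, 1 ≤ n i := fun i => le_trans (by omega) (hmin i)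
  constructor
  · rcases h𝔞 with h𝔞 | rfl
    · have hset : {𝔠 : Fin (r + 2) → ℕ | (∀ i, 1 ≤ 𝔠 i ∧ 𝔠 i ≤ n i) ∧ 𝔠 ≤ 𝔞}
          = ↑(Finset.Icc (1 : Fin (r + 2) → ℕ) 𝔞) := by
        ext 𝔠
        simp only [Set.mem_setOf_eq, Finset.coe_Icc, Set.mem_Icc]
        constructor
        · rintro ⟨h1, h2⟩
          exact ⟨fun i => (h1 i).1, h2⟩
        · rintro ⟨h1, h2⟩
          exact ⟨fun i => ⟨h1 i, le_trans (h2 i) (h𝔞 i).2⟩, h2⟩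
      rw [hset, finsum_mem_coe_finset]
      exact BCl_eq_sum hn C hj1 h𝔞
    · rw [BCl_zero (by omega) C hj1]
      have hset : {𝔠 : Fin (r + 2) → ℕ |
          (∀ i, 1 ≤ 𝔠 i ∧ 𝔠 i ≤ n i) ∧ 𝔠 ≤ (0 : Fin (r + 2) → ℕ)} = ∅ := by
        ext 𝔠
        simp only [Set.mem_setOf_eq, Set.mem_empty_iff_false, iff_false]
        rintro ⟨h1, h2⟩
        have h3 := h2 (0 : Fin (r + 2))
        have h4 := (h1 0).1
        simp only [Pi.zero_apply] at h3
        omega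
      rw [hset, finsum_mem_empty]
  · rcases h𝔟 with h𝔟 | rfl
    · have hset : {𝔠 : Fin (r + 2) → ℕ | (∀ i, 1 ≤ 𝔠 i ∧ 𝔠 i ≤ n i) ∧ 𝔠 ≤ 𝔟}
          = ↑(Finset.Icc (1 : Fin (r + 2) → ℕ) 𝔟) := by
        ext 𝔠
        simp only [Set.mem_setOf_eq, Finset.coe_Icc, Set.mem_Icc]
        constructor
        · rintro ⟨h1, h2⟩
          exact ⟨fun i => (h1 i).1, h2⟩
        · rintro ⟨h1, h2⟩
          exact ⟨fun i => ⟨h1 i, le_trans (h2 i) (h𝔟 i).2⟩, h2⟩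
      rw [hset, finsum_mem_coe_finset]
      exact WCl_eq_inversion hn C hj1 h𝔟
    · rw [WCl_zero (by omega) C hj1]
      have hset : {𝔠 : Fin (r + 2) → ℕ |
          (∀ i, 1 ≤ 𝔠 i ∧ 𝔠 i ≤ n i) ∧ 𝔠 ≤ (0 : Fin (r + 2) → ℕ)} = ∅ := by
        ext 𝔠
        simp only [Set.mem_setOf_eq, Set.mem_empty_iff_false, iff_false]
        rintro ⟨h1, h2⟩
        have h3 := h2 (0 : Fin (r + 2))
        have h4 := (h1 0).1
        simp only [Pi.zero_apply] at h3
        omega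
      rw [hset, finsum_mem_empty]

end TensorPaper
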